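/- For r ∈ ℂ and g = [[a,b],[c,d]] ∈ SL₂(ℝ), the kernel K_r(z;τ) = (2i/(z-τ))((z̄-τ)/(z̄-z))^{r-1} satisfies the invariance (cz+d)^{-r}(cτ+d)^{r-2} K_r(gz; gτ) = K_r(z;τ) for all z, τ ∈ ℍ with z ≠ τ. -/

import Mathlib

open Complex

noncomputable def mdenom (g : Matrix.SpecialLinearGroup (Fin 2) ℝ) (z : ℂ) : ℂ :=
  (g.1 1 0 : ℂ) * z + (g.1 1 1 : ℂ)

noncomputable def mact (g : Matrix.SpecialLinearGroup (Fin 2) ℝ) (z : ℂ) : ℂ :=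
  ((g.1 0 0 : ℂ) * z + (g.1 0 1 : ℂ)) / mdenom g z

/-- The kernel `K_r(z;τ) = (2i/(z-τ)) ((z̄-τ)/(z̄-z))^(r-1)` (principal branch). -/
noncomputable def Kker (r : ℂ) (z τ : ℂ) : ℂ :=
  2 * Complex.I / (z - τ) *
    (((starRingEnd ℂ z - τ) / (starRingEnd ℂ z - z)) ^ (r - 1))

/-!
With `j(z) = cz + d`, the identity `gz - gw = (z - w) / (j(z) j(w))` applied to the pairs
`(z, τ)`, `(z̄, τ)` and `(z̄, z)` (note `conj (gz) = g z̄`) shows that `2i/(z - τ)` picks up the factor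
`j(z) j(τ)` and the base `W = (z̄ - τ)/(z̄ - z)` becomes `W · j(z)/j(τ)`. What remains is to split
the principal power `(W · j(z)/j(τ))^(r-1)`: both `W` and its transform have positive real part
(`Re W = (Im z + Im τ)/(2 Im z)`), and `j(z)`, `j(τ)` lie in a common half-plane, so no `2πi`
correction of the logarithms occurs.
-/

open ComplexConjugate
open scoped Real

namespace Complex

theorem mul_cpow_of_arg_add_mem {x y : ℂ} (hx : x ≠ 0) (hy : y ≠ 0)
    (h : arg x + arg y ∈ Set.Ioc (-π) π) (s : ℂ) : (x * y) ^ s = x ^ s * y ^ s := by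
  rw [cpow_def_of_ne_zero (mul_ne_zero hx hy), cpow_def_of_ne_zero hx, cpow_def_of_ne_zero hy,
    log_mul hx hy h, add_mul, exp_add]

/-- `arg x + arg y - arg (x * y)` is a multiple of `2π` in `(-2π, 2π)`, hence zero. -/
theorem arg_add_arg_mem_Ioc_of_re_pos {x y : ℂ} (hx : 0 < x.re) (hxy : 0 < (x * y).re) :
    arg x + arg y ∈ Set.Ioc (-π) π := by
  have hy : y ≠ 0 := by rintro rfl; simp at hxy
  obtain ⟨k, hk⟩ := (Real.Angle.angle_eq_iff_two_pi_dvd_sub).1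
    ((arg_mul_coe_angle (ne_of_apply_ne re hx.ne') hy).trans (Real.Angle.coe_add _ _).symm)
  have hx' := abs_lt.1 (abs_arg_lt_pi_div_two_iff.2 (.inl hx))
  have hxy' := abs_lt.1 (abs_arg_lt_pi_div_two_iff.2 (.inl hxy))
  have hy' := arg_mem_Ioc y
  have hk0 : k = 0 := by
    have hlt : -1 < (k : ℝ) ∧ (k : ℝ) < 1 := by
      constructor <;> nlinarith [Real.pi_pos, hy'.1, hy'.2]
    obtain ⟨h1, h2⟩ : -1 < k ∧ k < 1 := by exact_mod_cast hlt
    omega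
  rw [hk0, Int.cast_zero, mul_zero, sub_eq_zero] at hk
  constructor <;> linarith

theorem mul_cpow_of_re_pos {x y : ℂ} (hx : 0 < x.re) (hxy : 0 < (x * y).re) (s : ℂ) :
    (x * y) ^ s = x ^ s * y ^ s :=
  mul_cpow_of_arg_add_mem (ne_of_apply_ne re hx.ne') (by rintro rfl; simp at hxy)
    (arg_add_arg_mem_Ioc_of_re_pos hx hxy) s

theorem div_cpow_of_im_mul_pos {x y : ℂ} (h : 0 < x.im * y.im) (s : ℂ) :
    (x / y) ^ s = x ^ s / y ^ s := by
  have hx : x ≠ 0 := by rintro rfl; simp at h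
  have hy : y ≠ 0 := by rintro rfl; simp at h
  have hyπ : arg y ≠ π := fun h' ↦ by simp [(arg_eq_pi_iff.1 h').2] at h
  have hmem : arg x + arg y⁻¹ ∈ Set.Ioc (-π) π := by
    rw [arg_inv, if_neg hyπ]
    have := neg_pi_lt_arg x
    have := neg_pi_lt_arg y
    rcases mul_pos_iff.1 h with ⟨hx', hy'⟩ | ⟨hx', hy'⟩
    · have := arg_nonneg_iff.2 hx'.le
      have := arg_nonneg_iff.2 hy'.le
      have := arg_lt_pi_iff.2 (.inr hx'.ne')
      have := arg_lt_pi_iff.2 (.inr hy'.ne')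
      constructor <;> linarith
    · have := arg_neg_iff.2 hx'
      have := arg_neg_iff.2 hy'
      constructor <;> linarith
  rw [div_eq_mul_inv, mul_cpow_of_arg_add_mem hx (inv_ne_zero hy) hmem, inv_cpow _ _ hyπ,
    div_eq_mul_inv]

end Complex

theorem re_conj_sub_div_conj_sub_pos {z τ : ℂ} (hz : 0 < z.im) (hτ : 0 < τ.im) :
    0 < ((conj z - τ) / (conj z - z)).re := by
  rw [div_re]
  simp only [sub_re, conj_re, sub_self, mul_zero, normSq_apply, sub_im, conj_im, zero_add, zero_div]
  apply div_pos <;> nlinarith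

section Moebius

variable (g : Matrix.SpecialLinearGroup (Fin 2) ℝ)

theorem Matrix.SpecialLinearGroup.fin_two_det_eq_one : g 0 0 * g 1 1 - g 0 1 * g 1 0 = 1 :=
  (Matrix.det_fin_two g.1).symm.trans g.2

theorem Matrix.SpecialLinearGroup.ofReal_fin_two_det_eq_one :
    (g 0 0 : ℂ) * g 1 1 - g 0 1 * g 1 0 = 1 := by
  exact_mod_cast g.fin_two_det_eq_one

@[simp]
theorem im_mdenom (z : ℂ) : (mdenom g z).im = g 1 0 * z.im := by
  simp [mdenom]

theorem conj_mdenom (z : ℂ) : conj (mdenom g z) = mdenom g (conj z) := by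
  simp [mdenom]

theorem conj_mact (z : ℂ) : conj (mact g z) = mact g (conj z) := by
  simp [mact, conj_mdenom]

theorem mdenom_ne_zero {z : ℂ} (hz : z.im ≠ 0) : mdenom g z ≠ 0 := by
  intro h
  have hc : g 1 0 = 0 := by simpa [hz] using congrArg im h
  have hd : g 1 1 = 0 := by simpa [mdenom, hc] using congrArg re h
  simpa [hc, hd] using g.fin_two_det_eq_one

theorem mact_sub_mact {z w : ℂ} (hz : mdenom g z ≠ 0) (hw : mdenom g w ≠ 0) :
    mact g z - mact g w = (z - w) / (mdenom g z * mdenom g w) := by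
  rw [mact, mact, div_sub_div _ _ hz hw, mdenom, mdenom]
  congr 1
  linear_combination (z - w) * g.ofReal_fin_two_det_eq_one

theorem im_mact (z : ℂ) : (mact g z).im = z.im / normSq (mdenom g z) := by
  rw [mact, div_im, ← sub_div]
  congr 1
  simp only [mdenom, add_im, mul_im, ofReal_re, ofReal_im, zero_mul, add_zero, add_re, mul_re,
    sub_zero]
  linear_combination z.im * g.fin_two_det_eq_one

theorem mact_im_pos {z : ℂ} (hz : 0 < z.im) : 0 < (mact g z).im := by
  rw [im_mact]
  exact div_pos hz (normSq_pos.2 (mdenom_ne_zero g hz.ne'))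

/-- For `c ≠ 0`, `cz + d` and `cτ + d` lie in the same open half-plane; for `c = 0` they agree. -/
theorem mdenom_div_cpow {z τ : ℂ} (hz : 0 < z.im) (hτ : 0 < τ.im) (s : ℂ) :
    (mdenom g z / mdenom g τ) ^ s = mdenom g z ^ s / mdenom g τ ^ s := by
  by_cases hc : g 1 0 = 0
  · have hd : mdenom g z = mdenom g τ := by simp [mdenom, hc]
    have hs : mdenom g τ ^ s ≠ 0 := by simp [cpow_eq_zero_iff, mdenom_ne_zero g hτ.ne']
    rw [hd, div_self (mdenom_ne_zero g hτ.ne'), one_cpow, div_self hs]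
  · refine div_cpow_of_im_mul_pos ?_ s
    rw [im_mdenom, im_mdenom]
    nlinarith [mul_pos (mul_self_pos.2 hc) (mul_pos hz hτ)]

theorem conj_mact_sub_div_conj_mact_sub {z τ : ℂ} (hz : 0 < z.im) (hτ : 0 < τ.im) :
    (conj (mact g z) - mact g τ) / (conj (mact g z) - mact g z)
      = (conj z - τ) / (conj z - z) * (mdenom g z / mdenom g τ) := by
  have hz' := mdenom_ne_zero g hz.ne'
  have hzc := mdenom_ne_zero g (z := conj z) (by simp [hz.ne'])
  have hτ' := mdenom_ne_zero g hτ.ne'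
  rw [conj_mact, mact_sub_mact g hzc hτ', mact_sub_mact g hzc hz']
  field_simp

end Moebius

/-- the kernel `K_r` satisfies the invariance
`(cz+d)^(-r) (cτ+d)^(r-2) K_r(gz; gτ) = K_r(z;τ)` for all `g ∈ SL₂(ℝ)` and
`z, τ ∈ ℍ`, `z ≠ τ` (principal branches, i.e. `arg ∈ (-π,π]` on ℍ). -/
theorem kernel_invariance (r : ℂ) (g : Matrix.SpecialLinearGroup (Fin 2) ℝ) :
    ∀ z τ : ℂ, 0 < z.im → 0 < τ.im → z ≠ τ →
      (mdenom g z) ^ (-r) * (mdenom g τ) ^ (r - 2) *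
          Kker r (mact g z) (mact g τ) = Kker r z τ := by
  intro z τ hz hτ hzτ
  have hp := mdenom_ne_zero g hz.ne'
  have hq := mdenom_ne_zero g hτ.ne'
  have hW := re_conj_sub_div_conj_sub_pos hz hτ
  have hgW := re_conj_sub_div_conj_sub_pos (mact_im_pos g hz) (mact_im_pos g hτ)
  rw [conj_mact_sub_div_conj_mact_sub g hz hτ] at hgW
  rw [Kker, Kker, mact_sub_mact g hp hq, conj_mact_sub_div_conj_mact_sub g hz hτ,
    mul_cpow_of_re_pos hW hgW, mdenom_div_cpow g hz hτ, cpow_neg, cpow_sub _ _ hp, cpow_sub _ _ hq,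
    cpow_sub _ _ hq, cpow_one, cpow_one, cpow_two]
  have hpr : mdenom g z ^ r ≠ 0 := by simp [cpow_eq_zero_iff, hp]
  have hqr : mdenom g τ ^ r ≠ 0 := by simp [cpow_eq_zero_iff, hq]
  have hzτ' : z - τ ≠ 0 := sub_ne_zero.2 hzτ
  field_simp
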